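/- For ν > 0 and x > 0 define the unit Matérn function M_ν(x) = x^ν K_ν(x) / (2^{ν−1} Γ(ν)), where K_ν is the modified Bessel function of the second kind. Then M_ν is strictly decreasing on (0,∞), satisfies 0 < M_ν(x) < 1 for all x > 0, and M_ν(x) → 1 as x → 0⁺. -/

import Mathlib

/-!
Substituting `s = (x/2) eᵗ` in `K_ν(x) = ½ ∫_ℝ e^{-x cosh t} e^{νt} dt` gives
`x^ν K_ν(x) = 2^{ν-1} ∫₀^∞ e^{-s} s^{ν-1} e^{-x²/(4s)} ds`, so `M_ν(x)` is this integral divided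
by `Γ(ν)`. At `x = 0` the integral is Euler's integral for `Γ(ν)`; the factor `e^{-x²/(4s)}`
decreases strictly in `x ≥ 0`, and the integrand is dominated by `e^{-s} s^{ν-1}` uniformly in `x`,
which gives monotonicity, the bounds `0 < M_ν < 1` and, by dominated convergence, `M_ν(0⁺) = 1`.
-/

/-- The modified Bessel function of the second kind, via its integral representation
`K_ν(x) = ∫_0^∞ e^{-x cosh t} cosh(ν t) dt`. -/
noncomputable def besselK (ν x : ℝ) : ℝ :=
  ∫ t in Set.Ioi (0 : ℝ), Real.exp (-x * Real.cosh t) * Real.cosh (ν * t)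

/-- The unit Matérn function `M_ν(x) = x^ν K_ν(x) / (2^(ν-1) Γ(ν))`. -/
noncomputable def maternFn (ν x : ℝ) : ℝ :=
  x ^ ν * besselK ν x / (2 ^ (ν - 1) * Real.Gamma ν)

open MeasureTheory Real Set Filter

section General

variable {E : Type*} [NormedAddCommGroup E] [NormedSpace ℝ E]

theorem setIntegral_pos_of_forall_pos {X : Type*} [MeasurableSpace X] {μ : Measure X}
    {s : Set X} {f : X → ℝ} (hs : MeasurableSet s) (hμ : μ s ≠ 0) (hf : IntegrableOn f s μ)
    (hpos : ∀ x ∈ s, 0 < f x) : 0 < ∫ x in s, f x ∂μ := by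
  have hnonneg : 0 ≤ᵐ[μ.restrict s] f :=
    (ae_restrict_mem hs).mono fun x hx => (hpos x hx).le
  rw [setIntegral_pos_iff_support_of_nonneg_ae hnonneg hf,
    inter_eq_self_of_subset_right fun x hx => Function.mem_support.mpr (hpos x hx).ne']
  exact pos_iff_ne_zero.mpr hμ

theorem integral_Ioi_add_comp_neg {g : ℝ → E} (hg : Integrable g) :
    ∫ t in Ioi 0, (g t + g (-t)) = ∫ t, g t := by
  rw [integral_add hg.integrableOn hg.comp_neg.integrableOn, integral_comp_neg_Ioi, neg_zero,
    add_comm]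
  exact intervalIntegral.integral_Iic_add_Ioi hg.integrableOn hg.integrableOn

theorem range_const_mul_exp {c : ℝ} (hc : 0 < c) : range (fun t => c * exp t) = Ioi 0 := by
  ext s
  refine ⟨?_, fun hs => ⟨log (s / c), ?_⟩⟩
  · rintro ⟨t, rfl⟩
    exact mul_pos hc (exp_pos t)
  · simp only [exp_log (div_pos hs hc), mul_div_cancel₀ _ hc.ne']

theorem hasDerivWithinAt_const_mul_exp (c t : ℝ) :
    HasDerivWithinAt (fun t => c * exp t) (c * exp t) univ t :=
  ((hasDerivAt_exp t).const_mul c).hasDerivWithinAt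

theorem injective_const_mul_exp {c : ℝ} (hc : c ≠ 0) : Function.Injective (fun t => c * exp t) :=
  fun _ _ h => exp_injective (mul_left_cancel₀ hc h)

theorem integral_Ioi_eq_integral_const_mul_exp (g : ℝ → E) {c : ℝ} (hc : 0 < c) :
    ∫ s in Ioi 0, g s = ∫ t, (c * exp t) • g (c * exp t) := by
  have h := integral_image_eq_integral_abs_deriv_smul MeasurableSet.univ
    (fun t _ => hasDerivWithinAt_const_mul_exp c t) (injective_const_mul_exp hc.ne').injOn g
  rw [image_univ, range_const_mul_exp hc, Measure.restrict_univ] at h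
  simpa only [abs_of_pos (mul_pos hc (exp_pos _))] using h

theorem integrableOn_Ioi_iff_integrable_const_mul_exp (g : ℝ → E) {c : ℝ} (hc : 0 < c) :
    IntegrableOn g (Ioi 0) ↔ Integrable (fun t => (c * exp t) • g (c * exp t)) := by
  have h := integrableOn_image_iff_integrableOn_abs_deriv_smul MeasurableSet.univ
    (fun t _ => hasDerivWithinAt_const_mul_exp c t) (injective_const_mul_exp hc.ne').injOn g
  rw [image_univ, range_const_mul_exp hc, integrableOn_univ] at h
  simpa only [abs_of_pos (mul_pos hc (exp_pos _))] using h

end General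

noncomputable def maternIntegrand (ν x s : ℝ) : ℝ :=
  exp (-s) * s ^ (ν - 1) * exp (-x ^ 2 / (4 * s))

noncomputable def maternIntegral (ν x : ℝ) : ℝ := ∫ s in Ioi 0, maternIntegrand ν x s

section MaternIntegral

variable {ν x s : ℝ}

theorem maternIntegrand_pos (hs : 0 < s) : 0 < maternIntegrand ν x s := by
  have := rpow_pos_of_pos hs (ν - 1)
  unfold maternIntegrand
  positivity

theorem maternIntegrand_zero : maternIntegrand ν 0 s = exp (-s) * s ^ (ν - 1) := by
  simp [maternIntegrand]

theorem maternIntegrand_lt_of_lt {a b : ℝ} (ha : 0 ≤ a) (hab : a < b) (hs : 0 < s) :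
    maternIntegrand ν b s < maternIntegrand ν a s := by
  have hexp : exp (-b ^ 2 / (4 * s)) < exp (-a ^ 2 / (4 * s)) := by gcongr
  have := rpow_pos_of_pos hs (ν - 1)
  unfold maternIntegrand
  gcongr

theorem maternIntegrand_le (hs : 0 < s) : maternIntegrand ν x s ≤ exp (-s) * s ^ (ν - 1) := by
  have := rpow_pos_of_pos hs (ν - 1)
  have : exp (-x ^ 2 / (4 * s)) ≤ 1 := exp_le_one_iff.mpr
    (div_nonpos_of_nonpos_of_nonneg (neg_nonpos.mpr (sq_nonneg x)) (by positivity))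
  exact mul_le_of_le_one_right (by positivity) this

theorem continuousOn_maternIntegrand : ContinuousOn (maternIntegrand ν x) (Ioi 0) := by
  intro s hs
  have hs : s ≠ 0 := ne_of_gt hs
  apply ContinuousAt.continuousWithinAt
  unfold maternIntegrand
  fun_prop (disch := simp [hs])

theorem norm_maternIntegrand_le_ae (ν x : ℝ) :
    ∀ᵐ s ∂(volume.restrict (Ioi 0)), ‖maternIntegrand ν x s‖ ≤ exp (-s) * s ^ (ν - 1) := by
  filter_upwards [ae_restrict_mem measurableSet_Ioi] with s hs
  rw [norm_of_nonneg (maternIntegrand_pos hs).le]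
  exact maternIntegrand_le hs

theorem integrableOn_maternIntegrand (hν : 0 < ν) (x : ℝ) :
    IntegrableOn (maternIntegrand ν x) (Ioi 0) :=
  (GammaIntegral_convergent hν).mono'
    (continuousOn_maternIntegrand.aestronglyMeasurable measurableSet_Ioi)
    (norm_maternIntegrand_le_ae ν x)

theorem maternIntegral_zero (hν : 0 < ν) : maternIntegral ν 0 = Gamma ν := by
  simp only [maternIntegral, maternIntegrand_zero, Gamma_eq_integral hν]

theorem maternIntegral_pos (hν : 0 < ν) (x : ℝ) : 0 < maternIntegral ν x :=
  setIntegral_pos_of_forall_pos measurableSet_Ioi (by simp) (integrableOn_maternIntegrand hν x)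
    fun _ hs => maternIntegrand_pos hs

theorem maternIntegral_strictAntiOn (hν : 0 < ν) : StrictAntiOn (maternIntegral ν) (Ici 0) := by
  intro a ha b _ hab
  have hdiff : 0 < ∫ s in Ioi 0, (maternIntegrand ν a s - maternIntegrand ν b s) :=
    setIntegral_pos_of_forall_pos measurableSet_Ioi (by simp)
      ((integrableOn_maternIntegrand hν a).sub (integrableOn_maternIntegrand hν b))
      fun _ hs => sub_pos.mpr (maternIntegrand_lt_of_lt ha hab hs)
  rw [integral_sub (integrableOn_maternIntegrand hν a) (integrableOn_maternIntegrand hν b)] at hdiff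
  exact sub_pos.mp hdiff

theorem continuous_maternIntegral (hν : 0 < ν) : Continuous (maternIntegral ν) :=
  continuous_of_dominated
    (fun x => continuousOn_maternIntegrand.aestronglyMeasurable measurableSet_Ioi)
    (norm_maternIntegrand_le_ae ν) (GammaIntegral_convergent hν)
    (ae_of_all _ fun s => by unfold maternIntegrand; fun_prop)

theorem const_mul_exp_mul_maternIntegrand (hx : 0 < x) (t : ℝ) :
    x / 2 * exp t * maternIntegrand ν x (x / 2 * exp t)
      = (x / 2) ^ ν * (exp (-x * cosh t) * exp (ν * t)) := by
  have hc : 0 < x / 2 := by positivity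
  have hs : 0 < x / 2 * exp t := by positivity
  have hpow : (x / 2 * exp t) ^ (ν - 1) = (x / 2) ^ ν * exp (ν * t) / (x / 2 * exp t) := by
    rw [rpow_sub_one hs.ne', mul_rpow hc.le (exp_pos t).le, ← exp_mul, mul_comm t]
  have hcosh :
      exp (-x * cosh t) = exp (-(x / 2 * exp t)) * exp (-x ^ 2 / (4 * (x / 2 * exp t))) := by
    rw [← exp_add, cosh_eq, exp_neg t]
    congr 1
    field_simp
    ring
  rw [maternIntegrand, hpow, hcosh]
  field_simp

theorem integrable_exp_neg_mul_cosh_mul_exp (hν : 0 < ν) (hx : 0 < x) :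
    Integrable (fun t => exp (-x * cosh t) * exp (ν * t)) := by
  have h := (integrableOn_Ioi_iff_integrable_const_mul_exp _ (half_pos hx)).mp
    (integrableOn_maternIntegrand hν x)
  simp only [smul_eq_mul, const_mul_exp_mul_maternIntegrand hx] at h
  exact (integrable_const_mul_iff (rpow_pos_of_pos (half_pos hx) ν).ne'.isUnit _).mp h

theorem maternIntegral_eq_integral_exp_neg_mul_cosh (hx : 0 < x) :
    maternIntegral ν x = (x / 2) ^ ν * ∫ t, exp (-x * cosh t) * exp (ν * t) := by
  rw [maternIntegral, integral_Ioi_eq_integral_const_mul_exp _ (half_pos hx), ← integral_const_mul]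
  simp only [smul_eq_mul, const_mul_exp_mul_maternIntegrand hx]

theorem besselK_eq_half_integral (hν : 0 < ν) (hx : 0 < x) :
    besselK ν x = (∫ t, exp (-x * cosh t) * exp (ν * t)) / 2 := by
  rw [← integral_Ioi_add_comp_neg (integrable_exp_neg_mul_cosh_mul_exp hν hx), besselK,
    ← integral_div]
  congr 1 with t
  rw [cosh_neg, cosh_eq (ν * t), mul_neg]
  ring

theorem maternFn_eq_maternIntegral_div_Gamma (hν : 0 < ν) (hx : 0 < x) :
    maternFn ν x = maternIntegral ν x / Gamma ν := by
  have h2 : (2 : ℝ) ^ (ν - 1) = 2 ^ ν / 2 := rpow_sub_one two_ne_zero ν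
  rw [maternFn, besselK_eq_half_integral hν hx, maternIntegral_eq_integral_exp_neg_mul_cosh hx,
    div_rpow hx.le zero_le_two, h2]
  have := rpow_pos_of_pos two_pos ν
  have := Gamma_pos_of_pos hν
  field_simp

end MaternIntegral

/-- For `ν > 0`, the unit Matérn function is strictly decreasing on `(0,∞)`, takes values
in `(0,1)`, and tends to `1` as `x → 0⁺`. -/
theorem stmt_12 (ν : ℝ) (hν : 0 < ν) :
    StrictAntiOn (maternFn ν) (Set.Ioi 0) ∧
    (∀ x : ℝ, 0 < x → 0 < maternFn ν x ∧ maternFn ν x < 1) ∧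
    Filter.Tendsto (maternFn ν) (nhdsWithin 0 (Set.Ioi 0)) (nhds 1) := by
  have hΓ : 0 < Gamma ν := Gamma_pos_of_pos hν
  have hM : EqOn (maternFn ν) (fun x => maternIntegral ν x / Gamma ν) (Ioi 0) :=
    fun x hx => maternFn_eq_maternIntegral_div_Gamma hν hx
  refine ⟨?_, fun x hx => ?_, ?_⟩
  · intro a ha b hb hab
    rw [hM ha, hM hb]
    exact div_lt_div_of_pos_right
      (maternIntegral_strictAntiOn hν (mem_Ici.mpr ha.le) (mem_Ici.mpr hb.le) hab) hΓ
  · rw [hM hx]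
    refine ⟨div_pos (maternIntegral_pos hν x) hΓ, (div_lt_one hΓ).mpr ?_⟩
    rw [← maternIntegral_zero hν]
    exact maternIntegral_strictAntiOn hν (mem_Ici.mpr le_rfl) (mem_Ici.mpr hx.le) hx
  · have h := ((continuous_maternIntegral hν).tendsto 0).div_const (Gamma ν)
    rw [maternIntegral_zero hν, div_self hΓ.ne'] at h
    exact (h.mono_left nhdsWithin_le_nhds).congr' (eventuallyEq_nhdsWithin_of_eqOn hM).symm
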